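/- The Desargues graph admits a coherent 6-cycle orientation of level 3; that is, one can choose, for each of the twenty 6-cycles of the Desargues graph, one of its two directions so that every path v_0, v_1, v_2 on 3 distinct vertices with consecutive vertices adjacent occurs as a consecutive segment of exactly one chosen directed 6-cycle. -/

import Mathlib

/-- A directed `g`-cycle of a simple graph `G`: an injective map `c : ZMod g → V`
with `c i` adjacent to `c (i+1)` for all `i`. -/
def IsDirCycleOn {V : Type*} (G : SimpleGraph V) (g : ℕ) (c : ZMod g → V) : Prop :=
  Function.Injective c ∧ ∀ i : ZMod g, G.Adj (c i) (c (i + 1))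

/-- A sequence of `k` distinct vertices with consecutive vertices adjacent. -/
def IsPathSeq {V : Type*} (G : SimpleGraph V) (k : ℕ) (v : Fin k → V) : Prop :=
  Function.Injective v ∧ ∀ (j : ℕ) (h : j + 1 < k),
    G.Adj (v ⟨j, Nat.lt_of_succ_lt h⟩) (v ⟨j + 1, h⟩)

/-- A coherent `g`-cycle orientation of level `k` of `G`: a set `D` of directed
`g`-cycles of `G` containing, for every `g`-cycle of `G`, exactly one of its two
directions (one representative up to rotation), and such that every sequence of `k`
distinct vertices `v 0, …, v (k-1)` with consecutive vertices adjacent occurs as a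
consecutive segment `(c i, c (i+1), …, c (i+k-1))` of exactly one `c ∈ D`. -/
def IsCoherentOrientation {V : Type*} (G : SimpleGraph V) (g k : ℕ)
    (D : Set (ZMod g → V)) : Prop :=
  (∀ c ∈ D, IsDirCycleOn G g c) ∧
  (∀ c : ZMod g → V, IsDirCycleOn G g c →
    ∃! c', c' ∈ D ∧
      ((∃ r : ZMod g, ∀ i, c' i = c (i + r)) ∨ (∃ r : ZMod g, ∀ i, c' i = c (r - i)))) ∧
  (∀ v : Fin k → V, IsPathSeq G k v →
    ∃! c, c ∈ D ∧ ∃ i : ZMod g, ∀ j : Fin k, c (i + ((j : ℕ) : ZMod g)) = v j)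

/-- The Desargues graph: vertex set `ZMod 20`, `i` adjacent to `i+1`, together with
the extra edges `{4x+3, 4x+8}` and `{4x+1, 4x+10}` for every `x`. -/
def desarguesGraph : SimpleGraph (ZMod 20) :=
  SimpleGraph.fromRel (fun i j =>
    j = i + 1 ∨ ∃ x : ZMod 20,
      (i = 4 * x + 3 ∧ j = 4 * x + 8) ∨ (i = 4 * x + 1 ∧ j = 4 * x + 10))

/-!
Every path on three vertices of the Desargues graph lies on exactly two of its twenty 6-cycles,
and the orientation chosen in `desarguesHexagon` makes these two cycles traverse the path in
opposite directions. Hence every directed path on three vertices is a segment of exactly one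
chosen cycle. For an arbitrary graph, coherence follows from segment properties of the chosen
cycles: they are all the `g`-cycles up to rotation and reversal, none is a reversal of another,
and two of them sharing a directed `k`-segment coincide. For the Desargues graph these are
finite checks.
-/

section CycleSymmetries

variable {V : Type*} {g : ℕ}

def IsCycleRotation (c' c : ZMod g → V) : Prop := ∃ r, ∀ i, c' i = c (i + r)

def IsCycleReflection (c' c : ZMod g → V) : Prop := ∃ r, ∀ i, c' i = c (r - i)

variable {c c₁ c₂ : ZMod g → V}

theorem IsCycleRotation.symm (h : IsCycleRotation c₁ c) : IsCycleRotation c c₁ := by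
  obtain ⟨r, hr⟩ := h
  exact ⟨-r, fun i => by rw [hr, neg_add_cancel_right]⟩

theorem IsCycleReflection.symm (h : IsCycleReflection c₁ c) : IsCycleReflection c c₁ := by
  obtain ⟨r, hr⟩ := h
  exact ⟨r, fun i => by rw [hr, sub_sub_cancel]⟩

theorem IsCycleRotation.trans (h₂ : IsCycleRotation c₂ c₁) (h₁ : IsCycleRotation c₁ c) :
    IsCycleRotation c₂ c := by
  obtain ⟨r₂, hr₂⟩ := h₂
  obtain ⟨r₁, hr₁⟩ := h₁
  exact ⟨r₂ + r₁, fun i => by rw [hr₂, hr₁, add_assoc]⟩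

theorem IsCycleReflection.trans (h₂ : IsCycleReflection c₂ c₁) (h₁ : IsCycleReflection c₁ c) :
    IsCycleRotation c₂ c := by
  obtain ⟨r₂, hr₂⟩ := h₂
  obtain ⟨r₁, hr₁⟩ := h₁
  exact ⟨r₁ - r₂, fun i => by rw [hr₂, hr₁]; congr 1; abel⟩

theorem IsCycleRotation.trans_reflection (h₂ : IsCycleRotation c₂ c₁)
    (h₁ : IsCycleReflection c₁ c) : IsCycleReflection c₂ c := by
  obtain ⟨r₂, hr₂⟩ := h₂
  obtain ⟨r₁, hr₁⟩ := h₁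
  exact ⟨r₁ - r₂, fun i => by rw [hr₂, hr₁, sub_add_eq_sub_sub_swap]⟩

theorem IsCycleReflection.trans_rotation (h₂ : IsCycleReflection c₂ c₁)
    (h₁ : IsCycleRotation c₁ c) : IsCycleReflection c₂ c := by
  obtain ⟨r₂, hr₂⟩ := h₂
  obtain ⟨r₁, hr₁⟩ := h₁
  exact ⟨r₂ + r₁, fun i => by rw [hr₂, hr₁, sub_add_eq_add_sub]⟩

theorem isCycleRotation_or_isCycleReflection_of_common
    (h₁ : IsCycleRotation c₁ c ∨ IsCycleReflection c₁ c)
    (h₂ : IsCycleRotation c₂ c ∨ IsCycleReflection c₂ c) :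
    IsCycleRotation c₂ c₁ ∨ IsCycleReflection c₂ c₁ := by
  rcases h₁ with h₁ | h₁ <;> rcases h₂ with h₂ | h₂
  · exact .inl (h₂.trans h₁.symm)
  · exact .inr (h₂.trans_rotation h₁.symm)
  · exact .inr (h₂.trans_reflection h₁.symm)
  · exact .inl (h₂.trans h₁.symm)

end CycleSymmetries

theorem isCoherentOrientation_range {V ι : Type*} {G : SimpleGraph V} {g k : ℕ}
    {cycle : ι → ZMod g → V}
    (hcycle : ∀ n, IsDirCycleOn G g (cycle n))
    (hcover : ∀ c, IsDirCycleOn G g c →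
      ∃ n, IsCycleRotation (cycle n) c ∨ IsCycleReflection (cycle n) c)
    (hchiral : ∀ n n', ¬ IsCycleReflection (cycle n') (cycle n))
    (hpath : ∀ v, IsPathSeq G k v →
      ∃ n i, ∀ j : Fin k, cycle n (i + ((j : ℕ) : ZMod g)) = v j)
    (hsegment : ∀ n n' i i', (∀ j : Fin k,
      cycle n (i + ((j : ℕ) : ZMod g)) = cycle n' (i' + ((j : ℕ) : ZMod g))) →
      cycle n = cycle n') :
    IsCoherentOrientation G g k (Set.range cycle) := by
  refine ⟨Set.forall_mem_range.2 hcycle, fun c hc => ?_, fun v hv => ?_⟩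
  · obtain ⟨n, hn⟩ := hcover c hc
    refine ⟨cycle n, ⟨Set.mem_range_self n, hn⟩, ?_⟩
    rintro _ ⟨⟨n', rfl⟩, hn'⟩
    rcases isCycleRotation_or_isCycleReflection_of_common hn hn' with ⟨r, hr⟩ | hrefl
    · exact hsegment n' n 0 r fun j => by rw [zero_add, hr, add_comm]
    · exact absurd hrefl (hchiral n n')
  · obtain ⟨n, i, hi⟩ := hpath v hv
    refine ⟨cycle n, ⟨Set.mem_range_self n, i, hi⟩, ?_⟩
    rintro _ ⟨⟨n', rfl⟩, i', hi'⟩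
    exact hsegment n' n i' i fun j => (hi' j).trans (hi j).symm

instance : DecidableRel desarguesGraph.Adj := fun a b =>
  inferInstanceAs (Decidable (a ≠ b ∧ _))

-- Deciding adjacency through these lists is far cheaper than through the existentials in the
-- definition of `desarguesGraph`.
def desarguesNeighbors : ZMod 20 → List (ZMod 20) :=
  ![[1, 15, 19], [0, 2, 10], [1, 3, 13], [2, 4, 8], [3, 5, 19], [4, 6, 14], [5, 7, 17],
    [6, 8, 12], [3, 7, 9], [8, 10, 18], [1, 9, 11], [10, 12, 16], [7, 11, 13], [2, 12, 14],
    [5, 13, 15], [0, 14, 16], [11, 15, 17], [6, 16, 18], [9, 17, 19], [0, 4, 18]]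

theorem desarguesGraph_adj_iff (a b : ZMod 20) :
    desarguesGraph.Adj a b ↔ b ∈ desarguesNeighbors a := by
  revert a b
  decide +kernel

def desarguesHexagon : Fin 20 → ZMod 6 → ZMod 20 :=
  ![![0, 1, 2, 3, 4, 19], ![0, 15, 14, 13, 2, 1], ![0, 19, 18, 9, 10, 1], ![0, 1, 10, 11, 16, 15],
    ![0, 19, 4, 5, 14, 15], ![0, 15, 16, 17, 18, 19], ![1, 10, 9, 8, 3, 2], ![1, 2, 13, 12, 11, 10],
    ![2, 13, 14, 5, 4, 3], ![2, 3, 8, 7, 12, 13], ![3, 4, 5, 6, 7, 8], ![3, 8, 9, 18, 19, 4],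
    ![4, 19, 18, 17, 6, 5], ![5, 14, 13, 12, 7, 6], ![5, 6, 17, 16, 15, 14], ![6, 17, 18, 9, 8, 7],
    ![6, 7, 12, 11, 16, 17], ![7, 8, 9, 10, 11, 12], ![9, 18, 17, 16, 11, 10],
    ![11, 12, 13, 14, 15, 16]]

-- A named tuple: `decide` fails to synthesize instances for `![…]` applied at `ZMod 6` indices.
def hexagon {α : Type*} (a b d e x y : α) : ZMod 6 → α := ![a, b, d, e, x, y]

theorem hexagon_self {α : Type*} (c : ZMod 6 → α) :
    hexagon (c 0) (c 1) (c 2) (c 3) (c 4) (c 5) = c := by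
  funext i
  fin_cases i <;> rfl

theorem isDirCycleOn_desarguesHexagon (n : Fin 20) :
    IsDirCycleOn desarguesGraph 6 (desarguesHexagon n) := by
  have h : ∀ n, Function.Injective (desarguesHexagon n) ∧
      ∀ i, desarguesHexagon n (i + 1) ∈ desarguesNeighbors (desarguesHexagon n i) := by
    decide +kernel
  exact ⟨(h n).1, fun i => (desarguesGraph_adj_iff _ _).2 ((h n).2 i)⟩

theorem not_isCycleReflection_desarguesHexagon :
    ∀ n n', ¬ IsCycleReflection (desarguesHexagon n') (desarguesHexagon n) := by
  unfold IsCycleReflection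
  decide +kernel

theorem exists_desarguesHexagon_of_isPathSeq (v : Fin 3 → ZMod 20)
    (hv : IsPathSeq desarguesGraph 3 v) :
    ∃ n i, ∀ j : Fin 3, desarguesHexagon n (i + ((j : ℕ) : ZMod 6)) = v j := by
  have key : ∀ a, ∀ b ∈ desarguesNeighbors a, ∀ d ∈ desarguesNeighbors b, a ≠ d →
      ∃ n i, desarguesHexagon n i = a ∧ desarguesHexagon n (i + 1) = b ∧
        desarguesHexagon n (i + 2) = d := by
    decide +kernel
  obtain ⟨hinj, hadj⟩ := hv
  obtain ⟨n, i, h₀, h₁, h₂⟩ := key (v 0)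
    (v 1) ((desarguesGraph_adj_iff _ _).1 (hadj 0 (by norm_num)))
    (v 2) ((desarguesGraph_adj_iff _ _).1 (hadj 1 (by norm_num))) (hinj.ne (by decide))
  refine ⟨n, i, fun j => ?_⟩
  fin_cases j
  · simpa using h₀
  · simpa using h₁
  · simpa using h₂

set_option synthInstance.maxSize 256 in
theorem exists_desarguesHexagon_of_isDirCycleOn (c : ZMod 6 → ZMod 20)
    (hc : IsDirCycleOn desarguesGraph 6 c) :
    ∃ n, IsCycleRotation (desarguesHexagon n) c ∨ IsCycleReflection (desarguesHexagon n) c := by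
  -- Closed non-backtracking walks of length six: as the girth is six, these are the 6-cycles.
  have key : ∀ a, ∀ b ∈ desarguesNeighbors a, ∀ d ∈ desarguesNeighbors b, a ≠ d →
      ∀ e ∈ desarguesNeighbors d, b ≠ e → ∀ x ∈ desarguesNeighbors e, d ≠ x →
      ∀ y ∈ desarguesNeighbors x, e ≠ y → a ∈ desarguesNeighbors y → x ≠ a → y ≠ b →
      ∃ n, IsCycleRotation (desarguesHexagon n) (hexagon a b d e x y) ∨
        IsCycleReflection (desarguesHexagon n) (hexagon a b d e x y) := by
    unfold IsCycleRotation IsCycleReflection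
    decide +kernel
  obtain ⟨hinj, hadj⟩ := hc
  have hmem (i : ZMod 6) : c (i + 1) ∈ desarguesNeighbors (c i) :=
    (desarguesGraph_adj_iff _ _).1 (hadj i)
  rw [← hexagon_self c]
  exact key _ _ (hmem 0) _ (hmem 1) (hinj.ne (by decide)) _ (hmem 2) (hinj.ne (by decide))
    _ (hmem 3) (hinj.ne (by decide)) _ (hmem 4) (hinj.ne (by decide)) (hmem 5)
    (hinj.ne (by decide)) (hinj.ne (by decide))

theorem desarguesHexagon_eq_of_segment (n n' : Fin 20) (i i' : ZMod 6)
    (h : ∀ j : Fin 3, desarguesHexagon n (i + ((j : ℕ) : ZMod 6)) =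
      desarguesHexagon n' (i' + ((j : ℕ) : ZMod 6))) :
    desarguesHexagon n = desarguesHexagon n' := by
  have key : ∀ (n n' : Fin 20) (i i' : ZMod 6),
      desarguesHexagon n i = desarguesHexagon n' i' →
      desarguesHexagon n (i + 1) = desarguesHexagon n' (i' + 1) →
      desarguesHexagon n (i + 2) = desarguesHexagon n' (i' + 2) → n = n' := by
    decide +kernel
  refine congrArg _ (key n n' i i' ?_ ?_ ?_)
  · simpa using h 0
  · simpa using h 1
  · simpa using h 2

/-- The Desargues graph admits a coherent 6-cycle orientation of level 3. -/
theorem desargues_coherent_orientation :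
    ∃ D : Set (ZMod 6 → ZMod 20), IsCoherentOrientation desarguesGraph 6 3 D :=
  ⟨_, isCoherentOrientation_range isDirCycleOn_desarguesHexagon
    exists_desarguesHexagon_of_isDirCycleOn not_isCycleReflection_desarguesHexagon
    exists_desarguesHexagon_of_isPathSeq desarguesHexagon_eq_of_segment⟩
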